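/- arXiv:1908.01912 — 5 statements merged into one kernel-verified Lean document; each statement's English description precedes it below -/
import Mathlib

section
/- For vector fields X₁, X₂ on Q and the geodesic spray S of an affine connection ∇ on TQ, the iterated Lie bracket satisfies [X₁^vlft, [S, X₂^vlft]](v_q) = 0 ⊕ ⟨X₁ : X₂⟩(q), i.e., it is the vertical lift of the symmetric product ⟨X₁ : X₂⟩ = ∇_{X₁} X₂ + ∇_{X₂} X₁. -/
section TangentBundleModel

variable {E : Type*} [NormedAddCommGroup E] [NormedSpace ℝ E]

/-- The Lie bracket of vector fields on a normed space: `[F,G](p) = DG(p)·F(p) − DF(p)·G(p)`. -/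
noncomputable def lieBkt {W : Type*} [NormedAddCommGroup W] [NormedSpace ℝ W]
    (F G : W → W) : W → W :=
  fun p => fderiv ℝ G p (F p) - fderiv ℝ F p (G p)

/-- Covariant derivative `(∇_X Y)(x) = DY(x)·X(x) + Γ(x)(X(x))(Y(x))`. -/
noncomputable def covDeriv (Γ : E → E →L[ℝ] E →L[ℝ] E) (X Y : E → E) : E → E :=
  fun x => fderiv ℝ Y x (X x) + Γ x (X x) (Y x)

/-- The geodesic spray on `TQ = E × E`: `S(x,v) = (v, −Γ(x)(v)(v))`. -/
noncomputable def spray (Γ : E → E →L[ℝ] E →L[ℝ] E) : E × E → E × E :=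
  fun p => (p.2, -(Γ p.1 p.2 p.2))

/-- The vertical lift of a vector field `X` on `Q = E` to `TQ = E × E`. -/
def vlift (X : E → E) : E × E → E × E := fun p => (0, X p.1)

end TangentBundleModel

open ContinuousLinearMap

/-- for vector fields `X₁, X₂` on `Q` and the geodesic spray `S`,
`[X₁^vlft, [S, X₂^vlft]](v_q) = 0 ⊕ ⟨X₁ : X₂⟩(q)`, the vertical lift of the symmetric
product `⟨X₁ : X₂⟩ = ∇_{X₁} X₂ + ∇_{X₂} X₁`. -/
theorem stmt_7 {E : Type*} [NormedAddCommGroup E] [NormedSpace ℝ E]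
    (Γ : E → E →L[ℝ] E →L[ℝ] E) (hΓ : ContDiff ℝ (⊤ : ℕ∞) Γ)
    (hsym : ∀ x u v, Γ x u v = Γ x v u)
    (X₁ X₂ : E → E) (hX₁ : ContDiff ℝ (⊤ : ℕ∞) X₁) (hX₂ : ContDiff ℝ (⊤ : ℕ∞) X₂) :
    ∀ x v : E, lieBkt (vlift X₁) (lieBkt (spray Γ) (vlift X₂)) (x, v)
      = (0, covDeriv Γ X₁ X₂ x + covDeriv Γ X₂ X₁ x) := by
  have hΓd : Differentiable ℝ Γ := hΓ.differentiable (by simp)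
  have hX₁d : Differentiable ℝ X₁ := hX₁.differentiable (by simp)
  have hX₂d : Differentiable ℝ X₂ := hX₂.differentiable (by simp)
  have hX₂d' : Differentiable ℝ (fderiv ℝ X₂) :=
    (hX₂.fderiv_right (m := 1) (WithTop.coe_le_coe.mpr le_top)).differentiable one_ne_zero
  -- derivative of a vertical lift
  have hvl : ∀ (X : E → E), Differentiable ℝ X → ∀ p : E × E,
      HasFDerivAt (vlift X)
        ((0 : (E × E) →L[ℝ] E).prod ((fderiv ℝ X p.1).comp (fst ℝ E E))) p := by
    intro X hX p
    exact HasFDerivAt.prodMk (hasFDerivAt_const (0 : E) p) (((hX p.1).hasFDerivAt).comp p (hasFDerivAt_fst (p := p)))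
  have hΓ1 : ∀ p : E × E, HasFDerivAt (fun p : E × E => Γ p.1)
      ((fderiv ℝ Γ p.1).comp (fst ℝ E E)) p := fun p =>
    HasFDerivAt.comp (G := E →L[ℝ] E →L[ℝ] E) p ((hΓd p.1).hasFDerivAt) (hasFDerivAt_fst (𝕜 := ℝ) (E := E) (F := E) (p := p))
  -- the inner bracket, explicitly
  have hg : lieBkt (spray Γ) (vlift X₂) = fun p : E × E =>
      (-(X₂ p.1), fderiv ℝ X₂ p.1 p.2 + (Γ p.1 (X₂ p.1) p.2 + Γ p.1 (X₂ p.1) p.2)) := by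
    funext p
    have h3 : HasFDerivAt (fun p : E × E => Γ p.1 p.2 p.2) _ p :=
      ((hΓ1 p).clm_apply hasFDerivAt_snd).clm_apply hasFDerivAt_snd
    have hS : HasFDerivAt (spray Γ) _ p := HasFDerivAt.prodMk hasFDerivAt_snd h3.neg
    show fderiv ℝ (vlift X₂) p (spray Γ p) - fderiv ℝ (spray Γ) p (vlift X₂ p) = _
    rw [(hvl X₂ hX₂d p).fderiv, hS.fderiv]
    ext <;> simp [spray, vlift, hsym p.1 p.2 (X₂ p.1)] <;> abel
  intro x v
  set p : E × E := (x, v) with hp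
  -- derivative of the inner bracket
  have hc1 : HasFDerivAt (fun p : E × E => -(X₂ p.1))
      (-((fderiv ℝ X₂ x).comp (fst ℝ E E))) p :=
    (((hX₂d x).hasFDerivAt).comp p hasFDerivAt_fst).neg
  have ht1 : HasFDerivAt (fun p : E × E => fderiv ℝ X₂ p.1 p.2) _ p :=
    HasFDerivAt.clm_apply (((hX₂d' x).hasFDerivAt).comp p hasFDerivAt_fst) hasFDerivAt_snd
  have hX2f : HasFDerivAt (fun p : E × E => X₂ p.1)
      ((fderiv ℝ X₂ x).comp (fst ℝ E E)) p :=
    ((hX₂d x).hasFDerivAt).comp p hasFDerivAt_fst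
  have hΓX2 : HasFDerivAt (fun p : E × E => Γ p.1 (X₂ p.1)) _ p :=
    (hΓ1 p).clm_apply hX2f
  have ht2 : HasFDerivAt (fun p : E × E => Γ p.1 (X₂ p.1) p.2) _ p :=
    hΓX2.clm_apply (hasFDerivAt_snd (𝕜 := ℝ) (E := E) (F := E) (p := p))
  have hG : HasFDerivAt (fun p : E × E =>
      (-(X₂ p.1), fderiv ℝ X₂ p.1 p.2 + (Γ p.1 (X₂ p.1) p.2 + Γ p.1 (X₂ p.1) p.2))) _ p :=
    hc1.prodMk (ht1.add (ht2.add ht2))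
  rw [← hg] at hG
  show fderiv ℝ (lieBkt (spray Γ) (vlift X₂)) p (vlift X₁ p)
      - fderiv ℝ (vlift X₁) p (lieBkt (spray Γ) (vlift X₂) p) = _
  rw [hG.fderiv, (hvl X₁ hX₁d p).fderiv, hg]
  ext <;> simp [vlift, covDeriv, hp, hsym x (X₁ x) (X₂ x)] <;> abel
end

section
/- Let D be an involutive distribution on Q to which the affine connection ∇ restricts (∇_v X ∈ Γ(D) for all vector fields v and X ∈ Γ(D)). Define the distribution D̃ on TQ by D̃ = span{D^H, D^vlft} (horizontal plus vertical lifts of D). Then D̃ is involutive. -/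
section TangentBundleModel

variable {E : Type*} [NormedAddCommGroup E] [NormedSpace ℝ E]

/-- The distribution `D̃ = span{D^H, D^vlft}` on `TQ = E × E`: at `(x,v)` it consists of
horizontal lifts `(a, −Γ(x)(a)(v))` with `a ∈ D_x` plus vertical lifts `(0, b)` with
`b ∈ D_x`; equivalently `{(a, c) : a ∈ D_x, c + Γ(x)(a)(v) ∈ D_x}`. -/
def liftedDist (Γ : E → E →L[ℝ] E →L[ℝ] E) (D : E → Submodule ℝ E)
    (p : E × E) : Set (E × E) :=
  {w | w.1 ∈ D p.1 ∧ w.2 + Γ p.1 w.1 p.2 ∈ D p.1}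

end TangentBundleModel

namespace Stmt11Aux

open ContinuousLinearMap

variable {E : Type*} [NormedAddCommGroup E] [NormedSpace ℝ E]

lemma dsym (Γ : E → E →L[ℝ] E →L[ℝ] E) (hΓ : ContDiff ℝ (⊤ : ℕ∞) Γ)
    (hsym : ∀ x u v, Γ x u v = Γ x v u) (x u w z : E) :
    fderiv ℝ Γ x u w z = fderiv ℝ Γ x u z w := by
  have hΓd : HasFDerivAt Γ (fderiv ℝ Γ x) x := (hΓ.differentiable (by simp) x).hasFDerivAt
  have h1 := (hΓd.clm_apply (hasFDerivAt_const w x)).clm_apply (hasFDerivAt_const z x)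
  have h2 := (hΓd.clm_apply (hasFDerivAt_const z x)).clm_apply (hasFDerivAt_const w x)
  have hfe : (fun y => Γ y w z) = fun y => Γ y z w := funext fun y => hsym y w z
  have hc : fderiv ℝ (fun y => Γ y w z) x = fderiv ℝ (fun y => Γ y z w) x := by rw [hfe]
  rw [h1.fderiv, h2.fderiv] at hc
  simpa using DFunLike.congr_fun hc u

set_option maxHeartbeats 2000000 in
theorem field_facts
    (Γ : E → E →L[ℝ] E →L[ℝ] E) (hΓ : ContDiff ℝ (⊤ : ℕ∞) Γ)
    (D : E → Submodule ℝ E)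
    (hrestrict : ∀ (w X : E → E), ContDiff ℝ (⊤ : ℕ∞) X → (∀ x, X x ∈ D x) →
      ∀ x, covDeriv Γ w X x ∈ D x)
    (f : E × E → E × E) (hf : ContDiff ℝ (⊤ : ℕ∞) f)
    (hfm : ∀ p, f p ∈ liftedDist Γ D p) (x v : E) :
    (∀ u : E, fderiv ℝ (fun y => (f (y, v)).1) x u = (fderiv ℝ f (x, v) (u, 0)).1) ∧
    (∀ u : E, (fderiv ℝ f (x, v) (0, u)).1 ∈ D x) ∧
    (∀ u : E, (fderiv ℝ f (x, v) (0, u)).2 + Γ x ((fderiv ℝ f (x, v) (0, u)).1) v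
        + Γ x ((f (x, v)).1) u ∈ D x) ∧
    (∀ u : E, (fderiv ℝ f (x, v) (u, 0)).2 + fderiv ℝ Γ x u ((f (x, v)).1) v
        + Γ x ((fderiv ℝ f (x, v) (u, 0)).1) v
        + Γ x u ((f (x, v)).2 + Γ x ((f (x, v)).1) v) ∈ D x) ∧
    (∀ u : E, fderiv ℝ Γ x u v ((f (x, v)).1) - fderiv ℝ Γ x v u ((f (x, v)).1)
        + Γ x u (Γ x v ((f (x, v)).1)) - Γ x v (Γ x u ((f (x, v)).1)) ∈ D x) := by
  have hfdiff : Differentiable ℝ f := hf.differentiable (by simp)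
  have hΓd : HasFDerivAt Γ (fderiv ℝ Γ x) x := (hΓ.differentiable (by simp) x).hasFDerivAt
  have hfd0 : HasFDerivAt f (fderiv ℝ f (x, v)) (x, v) := (hfdiff (x, v)).hasFDerivAt
  have hfd1 : HasFDerivAt f (fderiv ℝ f (x, v)) (x, v + (x - x)) := by simpa using hfd0
  have hι0 : HasFDerivAt (fun y : E => (y, v)) ((ContinuousLinearMap.id ℝ E).prod 0) x :=
    HasFDerivAt.prodMk (hasFDerivAt_id x) (hasFDerivAt_const v x)
  have hψ : HasFDerivAt (fun y : E => v + (y - x)) (ContinuousLinearMap.id ℝ E) x := by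
    simpa using ((hasFDerivAt_id x).sub_const x).const_add v
  have hι1 : HasFDerivAt (fun y : E => (y, v + (y - x)))
      ((ContinuousLinearMap.id ℝ E).prod (ContinuousLinearMap.id ℝ E)) x :=
    HasFDerivAt.prodMk (hasFDerivAt_id x) hψ
  have hι0C : ContDiff ℝ (⊤ : ℕ∞) (fun y : E => (y, v)) := contDiff_id.prodMk contDiff_const
  have hψC : ContDiff ℝ (⊤ : ℕ∞) (fun y : E => v + (y - x)) :=
    contDiff_const.add (contDiff_id.sub contDiff_const)
  have hι1C : ContDiff ℝ (⊤ : ℕ∞) (fun y : E => (y, v + (y - x))) := contDiff_id.prodMk hψC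
  have hA0C : ContDiff ℝ (⊤ : ℕ∞) (fun y : E => (f (y, v)).1) := (hf.comp hι0C).fst
  have hA1C : ContDiff ℝ (⊤ : ℕ∞) (fun y : E => (f (y, v + (y - x))).1) := (hf.comp hι1C).fst
  have hB0C : ContDiff ℝ (⊤ : ℕ∞) (fun y : E => (f (y, v)).2 + Γ y ((f (y, v)).1) v) :=
    (hf.comp hι0C).snd.add ((hΓ.clm_apply hA0C).clm_apply contDiff_const)
  have hB1C : ContDiff ℝ (⊤ : ℕ∞)
      (fun y : E => (f (y, v + (y - x))).2 + Γ y ((f (y, v + (y - x))).1) (v + (y - x))) :=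
    (hf.comp hι1C).snd.add ((hΓ.clm_apply hA1C).clm_apply hψC)
  have hA0m : ∀ y, (f (y, v)).1 ∈ D y := fun y => (hfm (y, v)).1
  have hA1m : ∀ y, (f (y, v + (y - x))).1 ∈ D y := fun y => (hfm (y, v + (y - x))).1
  have hB0m : ∀ y, (f (y, v)).2 + Γ y ((f (y, v)).1) v ∈ D y := fun y => (hfm (y, v)).2
  have hB1m : ∀ y, (f (y, v + (y - x))).2 + Γ y ((f (y, v + (y - x))).1) (v + (y - x)) ∈ D y :=
    fun y => (hfm (y, v + (y - x))).2
  have h01 : ∀ w : E, fderiv ℝ f (x, v) (w, w) =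
      fderiv ℝ f (x, v) (w, 0) + fderiv ℝ f (x, v) (0, w) := fun w => by
    rw [← map_add, Prod.mk_add_mk, add_zero, zero_add]
  have hA0d : HasFDerivAt (fun y : E => (f (y, v)).1)
      ((fst ℝ E E).comp ((fderiv ℝ f (x, v)).comp ((ContinuousLinearMap.id ℝ E).prod 0))) x :=
    (fst ℝ E E).hasFDerivAt.comp x (hfd0.comp x hι0)
  have hA1d : HasFDerivAt (fun y : E => (f (y, v + (y - x))).1)
      ((fst ℝ E E).comp ((fderiv ℝ f (x, v)).comp
        ((ContinuousLinearMap.id ℝ E).prod (ContinuousLinearMap.id ℝ E)))) x :=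
    (fst ℝ E E).hasFDerivAt.comp x (hfd1.comp x hι1)
  have hB0d : HasFDerivAt (fun y : E => (f (y, v)).2 + Γ y ((f (y, v)).1) v)
      ((snd ℝ E E).comp ((fderiv ℝ f (x, v)).comp ((ContinuousLinearMap.id ℝ E).prod 0)) +
        ((Γ x ((f (x, v)).1)).comp (0 : E →L[ℝ] E) +
          ((Γ x).comp ((fst ℝ E E).comp ((fderiv ℝ f (x, v)).comp
              ((ContinuousLinearMap.id ℝ E).prod 0))) +
            (fderiv ℝ Γ x).flip ((f (x, v)).1)).flip v)) x := by
    exact ((snd ℝ E E).hasFDerivAt.comp x (hfd0.comp x hι0)).add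
      ((hΓd.clm_apply hA0d).clm_apply (hasFDerivAt_const v x))
  have hB1d : HasFDerivAt
      (fun y : E => (f (y, v + (y - x))).2 + Γ y ((f (y, v + (y - x))).1) (v + (y - x)))
      ((snd ℝ E E).comp ((fderiv ℝ f (x, v)).comp
          ((ContinuousLinearMap.id ℝ E).prod (ContinuousLinearMap.id ℝ E))) +
        ((Γ x ((f (x, v + (x - x))).1)).comp (ContinuousLinearMap.id ℝ E) +
          ((Γ x).comp ((fst ℝ E E).comp ((fderiv ℝ f (x, v)).comp
              ((ContinuousLinearMap.id ℝ E).prod (ContinuousLinearMap.id ℝ E)))) +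
            (fderiv ℝ Γ x).flip ((f (x, v + (x - x))).1)).flip (v + (x - x)))) x := by
    exact ((snd ℝ E E).hasFDerivAt.comp x (hfd1.comp x hι1)).add
      ((hΓd.clm_apply hA1d).clm_apply hψ)
  refine ⟨?_, ?_, ?_, ?_, ?_⟩
  · intro u
    rw [hA0d.fderiv]
    simp
  · intro u
    have k1 : covDeriv Γ (fun _ => u) (fun y : E => (f (y, v + (y - x))).1) x ∈ D x :=
      hrestrict _ _ hA1C hA1m x
    have k0 : covDeriv Γ (fun _ => u) (fun y : E => (f (y, v)).1) x ∈ D x :=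
      hrestrict _ _ hA0C hA0m x
    have e : (fderiv ℝ f (x, v) (0, u)).1 =
        covDeriv Γ (fun _ => u) (fun y : E => (f (y, v + (y - x))).1) x -
        covDeriv Γ (fun _ => u) (fun y : E => (f (y, v)).1) x := by
      simp only [covDeriv]
      rw [hA1d.fderiv, hA0d.fderiv]
      simp [h01 u] <;> abel
    rw [e]; exact (D x).sub_mem k1 k0
  · intro u
    have k1 : covDeriv Γ (fun _ => u)
        (fun y : E => (f (y, v + (y - x))).2 + Γ y ((f (y, v + (y - x))).1) (v + (y - x))) x
        ∈ D x := hrestrict _ _ hB1C hB1m x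
    have k0 : covDeriv Γ (fun _ => u)
        (fun y : E => (f (y, v)).2 + Γ y ((f (y, v)).1) v) x ∈ D x :=
      hrestrict _ _ hB0C hB0m x
    have e : (fderiv ℝ f (x, v) (0, u)).2 + Γ x ((fderiv ℝ f (x, v) (0, u)).1) v
        + Γ x ((f (x, v)).1) u =
        covDeriv Γ (fun _ => u)
          (fun y : E => (f (y, v + (y - x))).2 + Γ y ((f (y, v + (y - x))).1) (v + (y - x))) x -
        covDeriv Γ (fun _ => u) (fun y : E => (f (y, v)).2 + Γ y ((f (y, v)).1) v) x := by
      simp only [covDeriv]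
      rw [hB1d.fderiv, hB0d.fderiv]
      simp [h01 u] <;> abel
    rw [e]; exact (D x).sub_mem k1 k0
  · intro u
    have k0 : covDeriv Γ (fun _ => u)
        (fun y : E => (f (y, v)).2 + Γ y ((f (y, v)).1) v) x ∈ D x :=
      hrestrict _ _ hB0C hB0m x
    have e : (fderiv ℝ f (x, v) (u, 0)).2 + fderiv ℝ Γ x u ((f (x, v)).1) v
        + Γ x ((fderiv ℝ f (x, v) (u, 0)).1) v
        + Γ x u ((f (x, v)).2 + Γ x ((f (x, v)).1) v) =
        covDeriv Γ (fun _ => u) (fun y : E => (f (y, v)).2 + Γ y ((f (y, v)).1) v) x := by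
      simp only [covDeriv]
      rw [hB0d.fderiv]
      simp
      abel
    rw [e]; exact k0
  · intro u
    have hd2 : HasFDerivAt (fderiv ℝ (fun y : E => (f (y, v)).1))
        (fderiv ℝ (fderiv ℝ (fun y : E => (f (y, v)).1)) x) x :=
      ((hA0C.fderiv_right (m := (⊤ : ℕ∞)) (by simp)).differentiable (by simp) x).hasFDerivAt
    have hTd : ∀ w : E, HasFDerivAt
        (fun y : E => fderiv ℝ (fun z : E => (f (z, v)).1) y w + Γ y w ((f (y, v)).1))
        (((fderiv ℝ (fun y : E => (f (y, v)).1) x).comp (0 : E →L[ℝ] E) +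
            (fderiv ℝ (fderiv ℝ (fun y : E => (f (y, v)).1)) x).flip w) +
          ((Γ x w).comp ((fst ℝ E E).comp ((fderiv ℝ f (x, v)).comp
              ((ContinuousLinearMap.id ℝ E).prod 0))) +
            ((Γ x).comp (0 : E →L[ℝ] E) +
              (fderiv ℝ Γ x).flip w).flip ((f (x, v)).1))) x := fun w =>
      (hd2.clm_apply (hasFDerivAt_const w x)).add
        ((hΓd.clm_apply (hasFDerivAt_const w x)).clm_apply hA0d)
    have hTC : ∀ w : E, ContDiff ℝ (⊤ : ℕ∞)
        (fun y : E => fderiv ℝ (fun z : E => (f (z, v)).1) y w + Γ y w ((f (y, v)).1)) :=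
      fun w => ((hA0C.fderiv_right (by simp)).clm_apply contDiff_const).add
        ((hΓ.clm_apply contDiff_const).clm_apply hA0C)
    have hTm : ∀ w y, fderiv ℝ (fun z : E => (f (z, v)).1) y w + Γ y w ((f (y, v)).1) ∈ D y :=
      fun w y => hrestrict (fun _ => w) _ hA0C hA0m y
    have k1 : covDeriv Γ (fun _ => u)
        (fun y : E => fderiv ℝ (fun z : E => (f (z, v)).1) y v + Γ y v ((f (y, v)).1)) x
        ∈ D x := hrestrict _ _ (hTC v) (hTm v) x
    have k2 : covDeriv Γ (fun _ => v)
        (fun y : E => fderiv ℝ (fun z : E => (f (z, v)).1) y u + Γ y u ((f (y, v)).1)) x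
        ∈ D x := hrestrict _ _ (hTC u) (hTm u) x
    have hsymm2 : ∀ w z : E, fderiv ℝ (fderiv ℝ (fun y : E => (f (y, v)).1)) x w z =
        fderiv ℝ (fderiv ℝ (fun y : E => (f (y, v)).1)) x z w :=
      second_derivative_symmetric (fun y => (hA0C.differentiable (by simp) y).hasFDerivAt) hd2
    have e : fderiv ℝ Γ x u v ((f (x, v)).1) - fderiv ℝ Γ x v u ((f (x, v)).1)
        + Γ x u (Γ x v ((f (x, v)).1)) - Γ x v (Γ x u ((f (x, v)).1)) =
        covDeriv Γ (fun _ => u)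
          (fun y : E => fderiv ℝ (fun z : E => (f (z, v)).1) y v + Γ y v ((f (y, v)).1)) x -
        covDeriv Γ (fun _ => v)
          (fun y : E => fderiv ℝ (fun z : E => (f (z, v)).1) y u + Γ y u ((f (y, v)).1)) x := by
      simp only [covDeriv]
      rw [(hTd v).fderiv, (hTd u).fderiv]
      simp [hsymm2 u v, hA0d.fderiv] <;> abel
    rw [e]; exact (D x).sub_mem k1 k2

end Stmt11Aux

set_option maxHeartbeats 2000000 in
/-- if `D` is an involutive distribution on `Q` to which the (torsion-free)
connection `∇` restricts (`∇_v X ∈ Γ(D)` for all vector fields `v` and sections `X` of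
`D`), then the distribution `D̃ = span{D^H, D^vlft}` on `TQ` is involutive. -/
theorem stmt_11 {E : Type*} [NormedAddCommGroup E] [NormedSpace ℝ E]
    (Γ : E → E →L[ℝ] E →L[ℝ] E) (hΓ : ContDiff ℝ (⊤ : ℕ∞) Γ)
    (hsym : ∀ x u v, Γ x u v = Γ x v u)
    (D : E → Submodule ℝ E)
    (hinv : ∀ (X Y : E → E), ContDiff ℝ (⊤ : ℕ∞) X → (∀ x, X x ∈ D x) →
      ContDiff ℝ (⊤ : ℕ∞) Y → (∀ x, Y x ∈ D x) → ∀ x, lieBkt X Y x ∈ D x)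
    (hrestrict : ∀ (v X : E → E), ContDiff ℝ (⊤ : ℕ∞) X → (∀ x, X x ∈ D x) →
      ∀ x, covDeriv Γ v X x ∈ D x) :
    ∀ (F G : E × E → E × E), ContDiff ℝ (⊤ : ℕ∞) F → (∀ p, F p ∈ liftedDist Γ D p) →
      ContDiff ℝ (⊤ : ℕ∞) G → (∀ p, G p ∈ liftedDist Γ D p) →
      ∀ p, lieBkt F G p ∈ liftedDist Γ D p := by
  intro F G hF hFm hG hGm p
  obtain ⟨x, v⟩ := p
  obtain ⟨hF0, hFv, hFb, hFh, hFc⟩ := Stmt11Aux.field_facts Γ hΓ D hrestrict F hF hFm x v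
  obtain ⟨hG0, hGv, hGb, hGh, hGc⟩ := Stmt11Aux.field_facts Γ hΓ D hrestrict G hG hGm x v
  have hDsym : ∀ u w z : E, fderiv ℝ Γ x u w z = fderiv ℝ Γ x u z w :=
    fun u w z => Stmt11Aux.dsym Γ hΓ hsym x u w z
  have hAFC : ContDiff ℝ (⊤ : ℕ∞) (fun y : E => (F (y, v)).1) :=
    (hF.comp (contDiff_id.prodMk contDiff_const)).fst
  have hAGC : ContDiff ℝ (⊤ : ℕ∞) (fun y : E => (G (y, v)).1) :=
    (hG.comp (contDiff_id.prodMk contDiff_const)).fst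
  have hm1 : (fderiv ℝ G (x, v) ((F (x, v)).1, 0)).1 -
      (fderiv ℝ F (x, v) ((G (x, v)).1, 0)).1 ∈ D x := by
    have hb := hinv (fun y : E => (F (y, v)).1) (fun y : E => (G (y, v)).1) hAFC
      (fun y => (hFm (y, v)).1) hAGC (fun y => (hGm (y, v)).1) x
    simp only [lieBkt] at hb
    rw [hG0 ((F (x, v)).1), hF0 ((G (x, v)).1)] at hb
    exact hb
  simp only [liftedDist, lieBkt, Set.mem_setOf_eq]
  constructor
  · have e : (fderiv ℝ G (x, v) (F (x, v)) - fderiv ℝ F (x, v) (G (x, v))).1 =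
        ((fderiv ℝ G (x, v) ((F (x, v)).1, 0)).1 -
          (fderiv ℝ F (x, v) ((G (x, v)).1, 0)).1) +
          (fderiv ℝ G (x, v) (0, (F (x, v)).2)).1 -
          (fderiv ℝ F (x, v) (0, (G (x, v)).2)).1 := by
      conv_lhs => rw [show F (x, v) = ((F (x, v)).1, 0) + (0, (F (x, v)).2) from by simp,
        show G (x, v) = ((G (x, v)).1, 0) + (0, (G (x, v)).2) from by simp]
      simp only [map_add, Prod.fst_add, Prod.fst_sub]
      abel
    rw [e]
    exact (D x).sub_mem ((D x).add_mem hm1 (hGv (F (x, v)).2)) (hFv (G (x, v)).2)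
  · have e : (fderiv ℝ G (x, v) (F (x, v)) - fderiv ℝ F (x, v) (G (x, v))).2 +
        Γ x ((fderiv ℝ G (x, v) (F (x, v)) - fderiv ℝ F (x, v) (G (x, v))).1) v =
        ((fderiv ℝ G (x, v) ((F (x, v)).1, 0)).2 +
            fderiv ℝ Γ x ((F (x, v)).1) ((G (x, v)).1) v +
            Γ x ((fderiv ℝ G (x, v) ((F (x, v)).1, 0)).1) v +
            Γ x ((F (x, v)).1) ((G (x, v)).2 + Γ x ((G (x, v)).1) v)) -
          ((fderiv ℝ F (x, v) ((G (x, v)).1, 0)).2 +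
            fderiv ℝ Γ x ((G (x, v)).1) ((F (x, v)).1) v +
            Γ x ((fderiv ℝ F (x, v) ((G (x, v)).1, 0)).1) v +
            Γ x ((G (x, v)).1) ((F (x, v)).2 + Γ x ((F (x, v)).1) v)) +
          ((fderiv ℝ G (x, v) (0, (F (x, v)).2)).2 +
            Γ x ((fderiv ℝ G (x, v) (0, (F (x, v)).2)).1) v +
            Γ x ((G (x, v)).1) ((F (x, v)).2)) -
          ((fderiv ℝ F (x, v) (0, (G (x, v)).2)).2 +
            Γ x ((fderiv ℝ F (x, v) (0, (G (x, v)).2)).1) v +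
            Γ x ((F (x, v)).1) ((G (x, v)).2)) +
          (fderiv ℝ Γ x ((G (x, v)).1) v ((F (x, v)).1) -
            fderiv ℝ Γ x v ((G (x, v)).1) ((F (x, v)).1) +
            Γ x ((G (x, v)).1) (Γ x v ((F (x, v)).1)) -
            Γ x v (Γ x ((G (x, v)).1) ((F (x, v)).1))) -
          (fderiv ℝ Γ x ((F (x, v)).1) v ((G (x, v)).1) -
            fderiv ℝ Γ x v ((F (x, v)).1) ((G (x, v)).1) +
            Γ x ((F (x, v)).1) (Γ x v ((G (x, v)).1)) -
            Γ x v (Γ x ((F (x, v)).1) ((G (x, v)).1))) := by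
      conv_lhs => rw [show F (x, v) = ((F (x, v)).1, 0) + (0, (F (x, v)).2) from by simp,
        show G (x, v) = ((G (x, v)).1, 0) + (0, (G (x, v)).2) from by simp]
      simp only [map_add, map_sub, Prod.snd_add, Prod.fst_add, Prod.snd_sub, Prod.fst_sub,
        ContinuousLinearMap.add_apply, ContinuousLinearMap.sub_apply]
      rw [hDsym ((F (x, v)).1) ((G (x, v)).1) v, hDsym ((G (x, v)).1) ((F (x, v)).1) v,
        hDsym v ((G (x, v)).1) ((F (x, v)).1), hsym x ((G (x, v)).1) v,
        hsym x ((F (x, v)).1) v, hsym x ((G (x, v)).1) ((F (x, v)).1)]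
      abel
    rw [e]
    exact (D x).sub_mem ((D x).add_mem ((D x).sub_mem ((D x).add_mem ((D x).sub_mem
      (hGh ((F (x, v)).1)) (hFh ((G (x, v)).1))) (hGb ((F (x, v)).2)))
      (hFb ((G (x, v)).2))) (hFc ((G (x, v)).1))) (hGc ((F (x, v)).1))
end

section
/- Let D be a k-dimensional involutive distribution on Q such that the torsion-free affine connection ∇ restricts to D and the curvature tensor satisfies R(X, v)v ∈ Γ(D) for all X ∈ Γ(D) and all vector fields v. Then the distribution D̃ = span{D^H, D^vlft} on TQ is invariant under the geodesic spray S, i.e., [S, D̃] ⊆ D̃. -/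
section TangentBundleModel

variable {E : Type*} [NormedAddCommGroup E] [NormedSpace ℝ E]

/-- The curvature tensor of the connection with Christoffel data `Γ`, evaluated on
(constant) vectors: `R(a,b)c = ∂_a Γ(b,c) − ∂_b Γ(a,c) + Γ(a, Γ(b,c)) − Γ(b, Γ(a,c))`. -/
noncomputable def curvature (Γ : E → E →L[ℝ] E →L[ℝ] E) (x a b c : E) : E :=
  fderiv ℝ (fun y => Γ y b c) x a - fderiv ℝ (fun y => Γ y a c) x b
    + Γ x a (Γ x b c) - Γ x b (Γ x a c)

end TangentBundleModel

/-- If a differentiable map takes values in a submodule of a finite-dimensional space,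
then its derivative also takes values in that submodule. -/
lemma fderiv_mem_submodule {W E : Type*} [NormedAddCommGroup W] [NormedSpace ℝ W]
    [NormedAddCommGroup E] [NormedSpace ℝ E] [FiniteDimensional ℝ E]
    (N : Submodule ℝ E) {g : W → E} {z : W}
    (hg : DifferentiableAt ℝ g z) (hmem : ∀ w, g w ∈ N) (u : W) :
    fderiv ℝ g z u ∈ N := by
  obtain ⟨q, hq⟩ := N.exists_isCompl
  let π : E →L[ℝ] q := LinearMap.toContinuousLinearMap (q.projectionOnto N hq.symm)
  have h1 : HasFDerivAt (fun w => π (g w)) (π.comp (fderiv ℝ g z)) z :=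
    π.hasFDerivAt.comp z hg.hasFDerivAt
  have h2 : (fun w => π (g w)) = fun _ => (0 : q) := by
    funext w
    simpa [π] using Submodule.projectionOnto_apply_of_mem_right hq.symm (hmem w)
  rw [h2] at h1
  have h3 : π.comp (fderiv ℝ g z) = 0 := h1.unique (hasFDerivAt_const 0 z)
  have h4 : (q.projectionOnto N hq.symm) (fderiv ℝ g z u) = 0 := by
    have := congrArg (fun L => L u) h3
    simpa [π] using this
  have h5 : fderiv ℝ g z u ∈ LinearMap.ker (q.projectionOnto N hq.symm) := h4
  rwa [Submodule.ker_projectionOnto] at h5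

set_option maxHeartbeats 2000000 in
/-- let `D` be a `k`-dimensional involutive distribution on `Q` such that
the torsion-free connection `∇` restricts to `D` and the curvature satisfies
`R(X, v)v ∈ Γ(D)` for all sections `X` of `D` and all vector fields `v`. Then the
distribution `D̃ = span{D^H, D^vlft}` on `TQ` is invariant under the geodesic spray `S`:
`[S, D̃] ⊆ D̃`. -/
theorem stmt_12 {E : Type*} [NormedAddCommGroup E] [NormedSpace ℝ E]
    [FiniteDimensional ℝ E]
    (Γ : E → E →L[ℝ] E →L[ℝ] E) (hΓ : ContDiff ℝ (⊤ : ℕ∞) Γ)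
    (hsym : ∀ x u v, Γ x u v = Γ x v u)
    (D : E → Submodule ℝ E) (k : ℕ)
    (hrank : ∀ x, Module.finrank ℝ (D x) = k)
    (hinv : ∀ (X Y : E → E), ContDiff ℝ (⊤ : ℕ∞) X → (∀ x, X x ∈ D x) →
      ContDiff ℝ (⊤ : ℕ∞) Y → (∀ x, Y x ∈ D x) → ∀ x, lieBkt X Y x ∈ D x)
    (hrestrict : ∀ (v X : E → E), ContDiff ℝ (⊤ : ℕ∞) X → (∀ x, X x ∈ D x) →
      ∀ x, covDeriv Γ v X x ∈ D x)
    (hcurv : ∀ (x : E) (v : E), ∀ a ∈ D x, curvature Γ x a v v ∈ D x) :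
    ∀ (F : E × E → E × E), ContDiff ℝ (⊤ : ℕ∞) F → (∀ p, F p ∈ liftedDist Γ D p) →
      ∀ p, lieBkt (spray Γ) F p ∈ liftedDist Γ D p := by
  intro F hF hFD p
  obtain ⟨x, v⟩ := p
  -- basic data
  have hFd : Differentiable ℝ F := hF.differentiable (by simp)
  have hΓd : Differentiable ℝ Γ := hΓ.differentiable (by simp)
  set A : E × E → E := fun q => (F q).1 with hAdef
  set B : E × E → E := fun q => (F q).2 with hBdef
  have hAc : ContDiff ℝ (⊤ : ℕ∞) A := hF.fst
  have hBc : ContDiff ℝ (⊤ : ℕ∞) B := hF.snd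
  have hA_mem : ∀ q : E × E, A q ∈ D q.1 := fun q => (hFD q).1
  have hM_mem : ∀ q : E × E, B q + Γ q.1 (A q) q.2 ∈ D q.1 := fun q => (hFD q).2
  set dF : E × E →L[ℝ] E × E := fderiv ℝ F (x, v) with hdF
  have hFp : HasFDerivAt F dF (x, v) := (hFd (x, v)).hasFDerivAt
  set dA : E × E →L[ℝ] E := (ContinuousLinearMap.fst ℝ E E).comp dF with hdA
  set dB : E × E →L[ℝ] E := (ContinuousLinearMap.snd ℝ E E).comp dF with hdB
  have hAp : HasFDerivAt A dA (x, v) :=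
    (ContinuousLinearMap.fst ℝ E E).hasFDerivAt.comp (x, v) hFp
  have hBp : HasFDerivAt B dB (x, v) :=
    (ContinuousLinearMap.snd ℝ E E).hasFDerivAt.comp (x, v) hFp
  set dΓ : E →L[ℝ] E →L[ℝ] E →L[ℝ] E := fderiv ℝ Γ x with hdΓ
  have hΓx : HasFDerivAt Γ dΓ x := (hΓd x).hasFDerivAt
  -- partial derivatives
  have hA1 : HasFDerivAt (fun y => A (y, v)) (dA.comp (.inl ℝ E E)) x :=
    hAp.comp (g := A) x (hasFDerivAt_prodMk_left x v)
  have hA2 : HasFDerivAt (fun w => A (x, w)) (dA.comp (.inr ℝ E E)) v :=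
    hAp.comp (g := A) v (hasFDerivAt_prodMk_right x v)
  have hB1 : HasFDerivAt (fun y => B (y, v)) (dB.comp (.inl ℝ E E)) x :=
    hBp.comp (g := B) x (hasFDerivAt_prodMk_left x v)
  have hB2 : HasFDerivAt (fun w => B (x, w)) (dB.comp (.inr ℝ E E)) v :=
    hBp.comp (g := B) v (hasFDerivAt_prodMk_right x v)
  -- derivative of the spray
  have hg1 : HasFDerivAt (fun q : E × E => Γ q.1) (dΓ.comp (ContinuousLinearMap.fst ℝ E E))
      (x, v) :=
      @HasFDerivAt.comp ℝ _ (E × E) _ _ E _ _ (E →L[ℝ] E →L[ℝ] E) _ _ Prod.fst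
        (ContinuousLinearMap.fst ℝ E E) (x, v) Γ _ hΓx hasFDerivAt_fst
  have hg2 := hg1.clm_apply (hasFDerivAt_snd (𝕜 := ℝ) (p := ((x, v) : E × E)))
  have hg3 := hg2.clm_apply (hasFDerivAt_snd (𝕜 := ℝ) (p := ((x, v) : E × E)))
  have hS : HasFDerivAt (spray Γ)
      ((ContinuousLinearMap.snd ℝ E E).prod
        (-(((Γ x v).comp (ContinuousLinearMap.snd ℝ E E)) +
          ((Γ x).comp ((ContinuousLinearMap.snd ℝ E E)) +
            (dΓ.comp (ContinuousLinearMap.fst ℝ E E)).flip v).flip v))) (x, v) :=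
    HasFDerivAt.prodMk (hasFDerivAt_snd (𝕜 := ℝ) (p := ((x, v) : E × E))) hg3.fun_neg

  -- convenience rfl lemmas
  have hfst : ∀ z : E × E, (dF z).1 = dA z := fun _ => rfl
  have hsnd : ∀ z : E × E, (dF z).2 = dB z := fun _ => rfl
  have hF1 : (F (x, v)).1 = A (x, v) := rfl
  have hF2 : (F (x, v)).2 = B (x, v) := rfl
  have hsplit : dF (v, -(Γ x v v)) = dF (v, 0) - dF (0, Γ x v v) := by
    rw [← map_sub, Prod.mk_sub_mk, sub_zero, zero_sub]
  have hcd : ContDiff ℝ (⊤ : ℕ∞) (fun y : E => (y, v)) := contDiff_id.prodMk contDiff_const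
  -- membership facts
  have m2 : dA (v, 0) + Γ x (A (x, v)) v ∈ D x := by
    have h := hrestrict (fun _ => v) (fun y => A (y, v)) (hAc.comp hcd)
      (fun y => hA_mem (y, v)) x
    rw [← hsym x v (A (x, v))]
    simpa [covDeriv, hA1.fderiv] using h
  have m1 : dA (0, Γ x v v) ∈ D x := by
    have h := fderiv_mem_submodule (D x) hA2.differentiableAt
      (fun w => hA_mem (x, w)) (Γ x v v)
    rw [hA2.fderiv] at h
    simpa using h
  -- M1 = fun y => B (y,v) + Γ y (A (y,v)) v
  have hΓA : HasFDerivAt (fun y => Γ y (A (y, v)))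
      ((Γ x).comp (dA.comp (.inl ℝ E E)) + dΓ.flip (A (x, v))) x := hΓx.clm_apply hA1
  have hΓAv := hΓA.clm_apply (hasFDerivAt_const v x)
  have hM1 := hB1.fun_add hΓAv
  have m3 := hrestrict (fun _ => v) (fun y => B (y, v) + Γ y (A (y, v)) v)
      ((hBc.comp hcd).add ((hΓ.clm_apply (hAc.comp hcd)).clm_apply contDiff_const))
      (fun y => hM_mem (y, v)) x
  simp only [covDeriv] at m3
  rw [hM1.fderiv] at m3
  -- M2 = fun w => B (x,w) + Γ x (A (x,w)) w
  have hΓA2 : HasFDerivAt (fun w => Γ x (A (x, w))) ((Γ x).comp (dA.comp (.inr ℝ E E))) v :=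
    (Γ x).hasFDerivAt.comp v hA2
  have hΓA2w := hΓA2.clm_apply (hasFDerivAt_id v)
  have hM2 := hB2.fun_add hΓA2w
  have m4 := fderiv_mem_submodule (D x) hM2.differentiableAt
    (fun w => hM_mem (x, w)) (Γ x v v)
  rw [hM2.fderiv] at m4
  -- curvature
  have hΓv := hΓx.clm_apply (hasFDerivAt_const v x)
  have hΓvv := hΓv.clm_apply (hasFDerivAt_const v x)
  have hΓa := hΓx.clm_apply (hasFDerivAt_const (A (x, v)) x)
  have hΓav := hΓa.clm_apply (hasFDerivAt_const v x)
  have mc := hcurv x v (A (x, v)) (hA_mem (x, v))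
  rw [curvature, hΓvv.fderiv, hΓav.fderiv] at mc
  -- the goal
  simp only [lieBkt, liftedDist, Set.mem_setOf_eq]
  rw [← hdF, hS.fderiv]
  constructor
  · have hmem := Submodule.sub_mem _ (Submodule.sub_mem _ m2 m1) (hM_mem (x, v))
    convert hmem using 1
    simp only [spray, hsplit, hfst, hsnd, hF1, hF2, Prod.fst_sub, Prod.snd_sub,
      ContinuousLinearMap.prod_apply, ContinuousLinearMap.coe_comp',
      Function.comp_apply, ContinuousLinearMap.coe_fst', ContinuousLinearMap.coe_snd',
      ContinuousLinearMap.add_apply, ContinuousLinearMap.neg_apply,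
      ContinuousLinearMap.flip_apply, map_sub, map_add, map_neg,
      ContinuousLinearMap.sub_apply, ContinuousLinearMap.zero_apply,
      ContinuousLinearMap.comp_zero, ContinuousLinearMap.zero_comp, zero_add, add_zero,
      ContinuousLinearMap.inl_apply, ContinuousLinearMap.inr_apply,
      ContinuousLinearMap.comp_id, ContinuousLinearMap.id_apply,
      ContinuousLinearMap.coe_id', id_eq]
    abel
  · have hmem := Submodule.add_mem _ (Submodule.sub_mem _ m3 m4) mc
    convert hmem using 1
    simp only [spray, hsplit, hfst, hsnd, hF1, hF2, Prod.fst_sub, Prod.snd_sub,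
      ContinuousLinearMap.prod_apply, ContinuousLinearMap.coe_comp',
      Function.comp_apply, ContinuousLinearMap.coe_fst', ContinuousLinearMap.coe_snd',
      ContinuousLinearMap.add_apply, ContinuousLinearMap.neg_apply,
      ContinuousLinearMap.flip_apply, map_sub, map_add, map_neg,
      ContinuousLinearMap.sub_apply, ContinuousLinearMap.zero_apply,
      ContinuousLinearMap.comp_zero, ContinuousLinearMap.zero_comp, zero_add, add_zero,
      ContinuousLinearMap.inl_apply, ContinuousLinearMap.inr_apply,
      ContinuousLinearMap.comp_id, ContinuousLinearMap.id_apply,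
      ContinuousLinearMap.coe_id', id_eq]
    abel
end

section
/- Consider the two-dimensional control system ẏ¹ = (y¹)² + y¹y², ẏ² = (y¹)² − (y²)² + y¹y² + u on the region y¹ < 0. Under the change of coordinates x̃¹ = y¹, x̃² = (y¹)² + y¹y², the system becomes the mechanical control system ẋ̃¹ = x̃², ẋ̃² = 4x̃¹x̃² − (x̃¹)³ + x̃¹u. -/
theorem stmt_14_general (y1 y2 u : ℝ → ℝ)
    (hy1 : ∀ t, HasDerivAt y1 ((y1 t) ^ 2 + y1 t * y2 t) t)
    (hy2 : ∀ t, HasDerivAt y2 ((y1 t) ^ 2 - (y2 t) ^ 2 + y1 t * y2 t + u t) t) :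
    ∀ t, HasDerivAt (fun s => y1 s) (((y1 t) ^ 2 + y1 t * y2 t)) t ∧
      HasDerivAt (fun s => (y1 s) ^ 2 + y1 s * y2 s)
        (4 * y1 t * ((y1 t) ^ 2 + y1 t * y2 t) - (y1 t) ^ 3 + y1 t * u t) t :=
  fun t => ⟨hy1 t, (((hy1 t).pow 2).add ((hy1 t).mul (hy2 t))).congr_deriv (by ring)⟩

/-- consider the control system
`ẏ¹ = (y¹)² + y¹y²`, `ẏ² = (y¹)² − (y²)² + y¹y² + u` on the region `y¹ < 0`.
Under the change of coordinates `x̃¹ = y¹`, `x̃² = (y¹)² + y¹y²`, every trajectory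
satisfies the mechanical control system
`ẋ̃¹ = x̃²`, `ẋ̃² = 4x̃¹x̃² − (x̃¹)³ + x̃¹u`. -/
theorem stmt_14 (y1 y2 u : ℝ → ℝ)
    (hneg : ∀ t, y1 t < 0)
    (hy1 : ∀ t, HasDerivAt y1 ((y1 t) ^ 2 + y1 t * y2 t) t)
    (hy2 : ∀ t, HasDerivAt y2 ((y1 t) ^ 2 - (y2 t) ^ 2 + y1 t * y2 t + u t) t) :
    ∀ t, HasDerivAt (fun s => y1 s) (((y1 t) ^ 2 + y1 t * y2 t)) t ∧
      HasDerivAt (fun s => (y1 s) ^ 2 + y1 s * y2 s)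
        (4 * y1 t * ((y1 t) ^ 2 + y1 t * y2 t) - (y1 t) ^ 3 + y1 t * u t) t :=
  stmt_14_general y1 y2 u hy1 hy2
end

section
/- Let D be an involutive distribution on Q that is geodesically invariant for ∇ and to which ∇ restricts, with coordinates (x, y) on Q chosen so that D = span{∂/∂x¹,…,∂/∂x^k}. Then the Christoffel symbols with all indices in the range k+1,…,n depend only on (x^{k+1},…,x^n), i.e., ∂Γ^a_{bc}/∂x^i = 0 for a,b,c ∈ {k+1,…,n} and i ∈ {1,…,k}; equivalently, the restricted geodesic equations for the variables (x^{k+1},…,x^n) are decoupled from (x¹,…,x^k). -/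
open scoped BigOperators

/-- The coordinate components `R^a_{b c d} = (R(∂_c, ∂_d)∂_b)^a` of the curvature of a
connection on `ℝⁿ` with Christoffel symbols `Γ x a b c = Γ^a_{bc}(x)`:
`R^a_{bcd} = ∂_c Γ^a_{db} − ∂_d Γ^a_{cb} + Γ^a_{ce}Γ^e_{db} − Γ^a_{de}Γ^e_{cb}`. -/
noncomputable def Rcoord (n : ℕ) (Γ : (Fin n → ℝ) → Fin n → Fin n → Fin n → ℝ)
    (x : Fin n → ℝ) (a b c d : Fin n) : ℝ :=
  fderiv ℝ (fun z => Γ z a d b) x (Pi.single c 1)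
    - fderiv ℝ (fun z => Γ z a c b) x (Pi.single d 1)
    + ∑ e, Γ x a c e * Γ x e d b - ∑ e, Γ x a d e * Γ x e c b

/-- Reduction of the polarized double sum. -/
lemma double_sum_polarize (n : ℕ) (f : Fin n → Fin n → ℝ) (u w : Fin n) :
    (∑ c', ∑ d', (Pi.single u 1 + Pi.single w 1 : Fin n → ℝ) c' *
      ((Pi.single u 1 + Pi.single w 1 : Fin n → ℝ) d') * f c' d')
      = f u u + f u w + f w u + f w w := by
  simp only [Pi.add_apply, Pi.single_apply, add_mul, mul_add, ite_mul, mul_ite,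
    one_mul, mul_one, zero_mul, mul_zero, Finset.sum_add_distrib,
    Finset.sum_ite_eq', Finset.mem_univ, if_true, add_zero, zero_add]
  ring

lemma double_sum_single (n : ℕ) (f : Fin n → Fin n → ℝ) (u : Fin n) :
    (∑ c', ∑ d', (Pi.single u 1 : Fin n → ℝ) c' *
      ((Pi.single u 1 : Fin n → ℝ) d') * f c' d') = f u u := by
  simp only [Pi.single_apply, ite_mul, mul_ite, one_mul, mul_one, zero_mul, mul_zero,
    Finset.sum_ite_eq', Finset.mem_univ, if_true]

/-- let `D = span{∂/∂x¹,…,∂/∂x^k}` in (Frobenius) coordinates on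
`Q = ℝⁿ` (so `D` is involutive), let the torsion-free connection `∇` restrict to `D`
(in coordinates: `Γ^a_{bc} = 0` for `a ≥ k`, `c < k`), be geodesically invariant via
the curvature condition `R(X, v)v ∈ Γ(D)` for `X ∈ Γ(D)`. Then the Christoffel symbols
with all indices in `{k+1,…,n}` depend only on `(x^{k+1},…,x^n)`:
`∂Γ^a_{bc}/∂x^i = 0` for `a, b, c ≥ k` and `i < k`. -/
theorem stmt_16 (n k : ℕ) (hk : k ≤ n)
    (Γ : (Fin n → ℝ) → Fin n → Fin n → Fin n → ℝ)
    (hsmooth : ∀ a b c : Fin n, ContDiff ℝ (⊤ : ℕ∞) (fun x => Γ x a b c))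
    -- torsion-free: Γ^a_{bc} symmetric in b, c
    (hsym : ∀ x (a b c : Fin n), Γ x a b c = Γ x a c b)
    -- ∇ restricts to D
    (hrestrict : ∀ x (a b c : Fin n), k ≤ (a : ℕ) → (c : ℕ) < k → Γ x a b c = 0)
    -- curvature condition: R(X, v)v ∈ Γ(D) for X ∈ Γ(D), pointwise:
    -- the D-transverse components of R(∂_j, v)v vanish for j < k
    (hcurv : ∀ x (v : Fin n → ℝ) (a j : Fin n), k ≤ (a : ℕ) → (j : ℕ) < k →
      ∑ c, ∑ d, v c * v d * Rcoord n Γ x a d j c = 0) :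
    ∀ x (a b c i : Fin n), k ≤ (a : ℕ) → k ≤ (b : ℕ) → k ≤ (c : ℕ) → (i : ℕ) < k →
      fderiv ℝ (fun z => Γ z a b c) x (Pi.single i 1) = 0 := by
  intro x a b c i ha hb hc hi
  -- key: the curvature component reduces to the derivative of Γ
  have key : ∀ (b' c' : Fin n), k ≤ (b' : ℕ) → k ≤ (c' : ℕ) →
      Rcoord n Γ x a c' i b' = fderiv ℝ (fun z => Γ z a b' c') x (Pi.single i 1) := by
    intro b' c' hb' hc'
    unfold Rcoord
    have h1 : (fun z => Γ z a i c') = (fun _ => (0 : ℝ)) := by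
      funext z; rw [hsym]; exact hrestrict z a c' i ha hi
    have h2 : ∀ e : Fin n, Γ x a i e * Γ x e b' c' = 0 := by
      intro e
      have : Γ x a i e = 0 := by rw [hsym]; exact hrestrict x a e i ha hi
      rw [this, zero_mul]
    have h3 : ∀ e : Fin n, Γ x a b' e * Γ x e i c' = 0 := by
      intro e
      rcases lt_or_ge (e : ℕ) k with he | he
      · rw [hrestrict x a b' e ha he, zero_mul]
      · rw [hsym x e i c', hrestrict x e c' i he hi, mul_zero]
    rw [h1]
    simp [h2, h3]
  have hbb := hcurv x (Pi.single b 1) a i ha hi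
  rw [double_sum_single n (fun c' d' => Rcoord n Γ x a d' i c') b] at hbb
  rw [key b b hb hb] at hbb
  have hcc := hcurv x (Pi.single c 1) a i ha hi
  rw [double_sum_single n (fun c' d' => Rcoord n Γ x a d' i c') c] at hcc
  rw [key c c hc hc] at hcc
  have hbc := hcurv x (Pi.single b 1 + Pi.single c 1) a i ha hi
  rw [double_sum_polarize n (fun c' d' => Rcoord n Γ x a d' i c') b c] at hbc
  rw [key b b hb hb, key b c hb hc, key c b hc hb, key c c hc hc] at hbc
  have heq : (fun z => Γ z a c b) = (fun z => Γ z a b c) := by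
    funext z; exact (hsym z a b c).symm
  rw [heq] at hbc
  rw [hbb, hcc] at hbc
  linarith
end
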